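/- arXiv:2301.12270 — 4 statements merged into one kernel-verified Lean document; each statement's English description precedes it below -/
import Mathlib

section
/- If α = [0; a₁, a₂, ...]⁻ is a negative continued fraction with all partial quotients a_i ≥ R for some integer R ≥ 3, then α ≤ (R - √(R²-4))/2 < 1/2. -/
/-- `α : ℕ → ℝ` is the sequence of tails of the negative continued fraction
`[0; a 1, a 2, ...]⁻`, i.e. `α n = [0; a (n+1), a (n+2), ...]⁻`. -/
def IsNegCFTails (a : ℕ → ℤ) (α : ℕ → ℝ) : Prop :=
  (∀ n, 2 ≤ a n) ∧ (∀ n, α n ∈ Set.Ioo (0 : ℝ) 1) ∧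
    ∀ n, α n = 1 / ((a (n + 1) : ℝ) - α (n + 1))

/-- If all partial quotients of `α = [0; a₁, a₂, ...]⁻` are at least `R ≥ 3`, then
`α ≤ (R - √(R²-4))/2 < 1/2`. -/
theorem negCF_le_periodic_bound (R : ℤ) (hR : 3 ≤ R) (a : ℕ → ℤ) (α : ℕ → ℝ)
    (h : IsNegCFTails a α) (ha : ∀ i, R ≤ a i) :
    α 0 ≤ ((R : ℝ) - Real.sqrt ((R : ℝ) ^ 2 - 4)) / 2 ∧
      ((R : ℝ) - Real.sqrt ((R : ℝ) ^ 2 - 4)) / 2 < 1 / 2 := by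
  obtain ⟨ha2, hio, hrec⟩ := h
  have hR' : (3 : ℝ) ≤ (R : ℝ) := by exact_mod_cast hR
  set s := Real.sqrt ((R : ℝ) ^ 2 - 4) with hs
  have hs2 : s ^ 2 = (R : ℝ) ^ 2 - 4 := Real.sq_sqrt (by nlinarith)
  have hs0 : 0 ≤ s := Real.sqrt_nonneg _
  have hsltR : s < (R : ℝ) := by nlinarith
  have hRm1 : (R : ℝ) - 1 < s := by nlinarith
  set c : ℝ := ((R : ℝ) - s) / 2 with hc
  have hc_eq : c * ((R : ℝ) - c) = 1 := by rw [hc]; nlinarith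
  have hc_pos : 0 < c := by rw [hc]; linarith
  have hc_half : c < 1 / 2 := by rw [hc]; linarith
  refine ⟨?_, hc_half⟩
  have key : ∀ n m, α m - c ≤ (1 / 4 : ℝ) ^ n := by
    intro n
    induction n with
    | zero =>
      intro m
      have := (hio m).2
      simp only [pow_zero]
      linarith
    | succ n ih =>
      intro m
      have h1 := (hio (m + 1)).1
      have h2 := (hio (m + 1)).2
      have haR : (R : ℝ) ≤ (a (m + 1) : ℝ) := by exact_mod_cast ha (m + 1)
      have hdenR : (0 : ℝ) < (R : ℝ) - α (m + 1) := by linarith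
      have hden : (0 : ℝ) < (a (m + 1) : ℝ) - α (m + 1) := by linarith
      have hstep : α m ≤ 1 / ((R : ℝ) - α (m + 1)) := by
        rw [hrec m]
        apply one_div_le_one_div_of_le hdenR
        linarith
      have hmul : α m * ((R : ℝ) - α (m + 1)) ≤ 1 := by
        have := (le_div_iff₀ hdenR).mp hstep
        linarith
      have hx2 : (2 : ℝ) ≤ (R : ℝ) - α (m + 1) := by linarith
      have ihm := ih (m + 1)
      have hp : (0 : ℝ) < (1 / 4 : ℝ) ^ n := by positivity
      rcases le_or_gt (α (m + 1)) c with hxc | hxc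
      · -- α m ≤ 1/(R - α(m+1)) ≤ 1/(R - c) = c
        have : α m ≤ c := by
          have h3 : 1 / ((R : ℝ) - α (m + 1)) ≤ 1 / ((R : ℝ) - c) := by
            apply one_div_le_one_div_of_le (by linarith)
            linarith
          have h4 : 1 / ((R : ℝ) - c) = c := by
            rw [eq_comm, eq_div_iff (by linarith)]
            linarith [hc_eq]
          linarith [hstep, h3, h4.le]
        have h5 : (0 : ℝ) < (1 / 4 : ℝ) ^ (n + 1) := by positivity
        linarith
      · have hprod : (0 : ℝ) ≤ (α (m + 1) - c) * (((R : ℝ) - α (m + 1)) - 4 * c) :=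
          mul_nonneg (by linarith) (by linarith)
        have hprod2 : (0 : ℝ) ≤ ((1 / 4 : ℝ) ^ n - (α (m + 1) - c)) * (((R : ℝ) - α (m + 1)) - 2) :=
          mul_nonneg (by linarith) (by linarith)
        have hgoal : α m ≤ c + (1 / 4 : ℝ) ^ n / 4 := by
          nlinarith [hmul, hc_eq, hprod, hprod2, hp, hdenR, hc_pos]
        have : ((1 / 4 : ℝ)) ^ (n + 1) = (1 / 4 : ℝ) ^ n / 4 := by ring
        linarith [hgoal, this.ge]
  have hfinal : ∀ ε : ℝ, 0 < ε → α 0 ≤ c + ε := by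
    intro ε hε
    obtain ⟨n, hn⟩ := exists_pow_lt_of_lt_one hε (by norm_num : (1 / 4 : ℝ) < 1)
    linarith [key n 0]
  exact le_of_forall_pos_le_add hfinal
end

section
/- Let R ≥ 3 be an integer and β = (3-√5)/2. If 1/R < ᾱ ≤ β and 0 < α ≤ β, then (1 - 2ᾱ)/(4(1 - ᾱα)) < C(R) := (1/4)(1 - 1/R)(1 - 1/R²). -/
set_option maxHeartbeats 1000000


/-- If `R ≥ 3`, `β = (3-√5)/2`, `1/R < ᾱ ≤ β`, `0 < α ≤ β`, then
`(1-2ᾱ)/(4(1-ᾱα)) < C(R) = (1/4)(1-1/R)(1-1/R²)`. -/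
theorem case_tk_ge_three_bound (R : ℤ) (hR : 3 ≤ R)
    (β : ℝ) (hβ : β = (3 - Real.sqrt 5) / 2)
    (abar α : ℝ) (habar : 1 / (R : ℝ) < abar ∧ abar ≤ β)
    (hα : 0 < α ∧ α ≤ β) :
    (1 - 2 * abar) / (4 * (1 - abar * α)) <
      (1 / 4) * (1 - 1 / (R : ℝ)) * (1 - 1 / (R : ℝ) ^ 2) := by
  obtain ⟨h1, h2⟩ := habar
  obtain ⟨h3, h4⟩ := hα
  have hs : Real.sqrt 5 ^ 2 = 5 := Real.sq_sqrt (by norm_num)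
  have hsnn := Real.sqrt_nonneg 5
  have hs2 : (13:ℝ)/9 < Real.sqrt 5 := by nlinarith
  have hβ1 : β < 7/9 := by rw [hβ]; linarith
  have hβ0 : 0 < β := by
    rw [hβ]
    have : Real.sqrt 5 < 3 := by nlinarith
    linarith
  have hR0 : (0:ℝ) < R := by exact_mod_cast (by linarith : (0:ℤ) < R)
  have hR3 : (3:ℝ) ≤ R := by exact_mod_cast hR
  set r : ℝ := 1 / (R : ℝ) with hr
  have hr0 : 0 < r := by positivity
  have hr3 : r ≤ 1/3 := by
    rw [hr]
    rw [div_le_div_iff₀ hR0 (by norm_num)]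
    linarith
  have habar0 : 0 < abar := lt_trans hr0 h1
  have hβhalf : β < 1/2 := by rw [hβ]; nlinarith
  have hden : 0 < 1 - abar * α := by nlinarith
  rw [div_lt_iff₀ (by linarith)]
  set C : ℝ := (1 - r) * (1 - r^2) with hC
  have hC1 : C ≤ 1 := by nlinarith
  have hC0 : 0 < C := by
    have : r < 1 := by linarith
    nlinarith
  have hkey : C * α ≤ 1 - r + r^2 := by
    have h5 : C * α ≤ α := by nlinarith
    have h6 : (7:ℝ)/9 ≤ 1 - r + r^2 := by nlinarith [mul_nonneg (by linarith : (0:ℝ) ≤ 1/3 - r) (by linarith : (0:ℝ) ≤ 2/3 - r)]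
    linarith
  have hfin : (1 - C) - abar * (2 - C * α) < 0 := by
    have h7 : 0 < 2 - C * α := by nlinarith
    have h8 : (1 - C) - r * (2 - C * α) ≤ 0 := by
      have : (1 - C) - r * (2 - C * α) = -r * ((1 - r + r^2) - C * α) := by
        rw [hC]; ring
      rw [this]
      nlinarith
    nlinarith [mul_pos (by linarith : (0:ℝ) < abar - r) h7]
  have hrw : (1:ℝ) / (R:ℝ)^2 = r^2 := by rw [hr, div_pow, one_pow]
  rw [hrw]
  have hgoal : (1/4 : ℝ) * (1 - r) * (1 - r^2) * (4 * (1 - abar * α)) = C * (1 - abar * α) := by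
    rw [hC]; ring
  rw [hgoal]
  nlinarith [hfin]
end

section
/- Let R ≥ 3 be an integer. If 1/R < ᾱ < 1/2 and 0 < α < 1/2 with ᾱ(1 + 1/R) < 1, then (1 - ᾱ(2 - 1/R))(1 - α + 1/R)/(4(1 - ᾱα)) < (1/4)(1 - 1/R)(1 - 1/R²). -/
/-- Case 1 inequality: if `R ≥ 3`, `1/R < ᾱ < 1/2`, `0 < α < 1/2`, and
`ᾱ(1 + 1/R) < 1`, then `(1 - ᾱ(2-1/R))(1 - α + 1/R)/(4(1-ᾱα)) < (1/4)(1-1/R)(1-1/R²)`. -/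
theorem case_one_bound (R : ℤ) (hR : 3 ≤ R)
    (abar α : ℝ) (habar : 1 / (R : ℝ) < abar ∧ abar < 1 / 2)
    (hα : 0 < α ∧ α < 1 / 2)
    (h : abar * (1 + 1 / (R : ℝ)) < 1) :
    (1 - abar * (2 - 1 / (R : ℝ))) * (1 - α + 1 / (R : ℝ)) /
        (4 * (1 - abar * α)) <
      (1 / 4) * (1 - 1 / (R : ℝ)) * (1 - 1 / (R : ℝ) ^ 2) := by
  obtain ⟨h1, h2⟩ := habar
  obtain ⟨h3, h4⟩ := hα
  have hR3 : (3:ℝ) ≤ (R:ℝ) := by exact_mod_cast hR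
  have hRpos : (0:ℝ) < (R:ℝ) := by linarith
  have hr1 : 0 < 1 / (R:ℝ) := by positivity
  have hr2 : 1 / (R:ℝ) ≤ 1/3 := by
    rw [div_le_div_iff₀ hRpos (by norm_num)]; linarith
  set r := 1 / (R:ℝ) with hrdef
  have hsq : 1 / (R:ℝ) ^ 2 = r ^ 2 := by rw [hrdef]; field_simp
  rw [hsq]
  have hden : 0 < 4 * (1 - abar * α) := by nlinarith
  rw [div_lt_iff₀ hden]
  have hra : 0 < 1 - r * α := by nlinarith
  have key1 : (1 - abar * (2 - r)) * (1 - r * α) < (1 - r)^2 * (1 - abar * α) := by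
    nlinarith [mul_pos (sub_pos.mpr h1) (show (0:ℝ) < 2 - r - α by linarith)]
  have key2 : (1 - α + r) ≤ (1 + r) * (1 - r * α) := by
    nlinarith [mul_pos h3 (show (0:ℝ) < 1 - r - r^2 by nlinarith)]
  have hA : 0 < 1 - abar * (2 - r) := by nlinarith
  have hB : 0 < 1 - α + r := by linarith
  nlinarith [mul_lt_mul_of_pos_right key1 hB,
    mul_le_mul_of_nonneg_left key2 (le_of_lt (mul_pos
      (show (0:ℝ) < (1-r)^2 by nlinarith) (show (0:ℝ) < 1 - abar*α by nlinarith))),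
    mul_pos hA hB, hra]
end

section
/- Let R ≥ 3 be an integer, and let ᾱ, α satisfy 1/R < ᾱ < 1/2 and 0 < α < 1/2. Then ((1-ᾱ)² - (1 - 1/R)²ᾱ²)((1-α)² - 1/R²)/(1 - ᾱα)² < (1 - 1/R)²(1 - 1/R²)². -/
set_option maxHeartbeats 1600000 in
/-- Case 3 inequality: if `R ≥ 3`, `1/R < ᾱ < 1/2`, `0 < α < 1/2`, then
`((1-ᾱ)² - (1-1/R)²ᾱ²)((1-α)² - 1/R²)/(1-ᾱα)² < (1-1/R)²(1-1/R²)²`. -/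
theorem case_three_bound (R : ℤ) (hR : 3 ≤ R)
    (abar α : ℝ) (habar : 1 / (R : ℝ) < abar ∧ abar < 1 / 2)
    (hα : 0 < α ∧ α < 1 / 2) :
    ((1 - abar) ^ 2 - (1 - 1 / (R : ℝ)) ^ 2 * abar ^ 2) *
        ((1 - α) ^ 2 - 1 / (R : ℝ) ^ 2) / (1 - abar * α) ^ 2 <
      (1 - 1 / (R : ℝ)) ^ 2 * (1 - 1 / (R : ℝ) ^ 2) ^ 2 := by
  obtain ⟨h1, h2⟩ := habar
  obtain ⟨h3, h4⟩ := hα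
  have hRr : (3 : ℝ) ≤ (R : ℝ) := by exact_mod_cast hR
  have hRpos : (0 : ℝ) < (R : ℝ) := by linarith
  set r : ℝ := 1 / (R : ℝ) with hr
  have hr0 : 0 < r := by positivity
  have hr3 : r ≤ 1 / 3 := by
    rw [hr, div_le_div_iff₀ hRpos (by norm_num)]; linarith
  have hr2 : 1 / (R : ℝ) ^ 2 = r ^ 2 := by
    rw [hr]; field_simp
  rw [hr2]
  have hab : r < abar := h1
  have hD : 0 < 1 - abar * α := by nlinarith
  have hD2 : (0 : ℝ) < (1 - abar * α) ^ 2 := by positivity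
  rw [div_lt_iff₀ hD2]
  have hA : (1 - abar) ^ 2 - (1 - r) ^ 2 * abar ^ 2 < (1 - r) ^ 2 * (1 - r ^ 2) := by
    nlinarith [mul_pos (sub_pos.mpr hab) hr0, sq_nonneg (abar - r), sq_nonneg (abar + r)]
  have hab0 : 0 < abar := hr0.trans hab
  have hkey : (1 - r) * abar < 1 - abar := by nlinarith [mul_pos hab0 hr0]
  have hnn : 0 ≤ (1 - r) * abar := by nlinarith
  have hA0 : 0 < (1 - abar) ^ 2 - (1 - r) ^ 2 * abar ^ 2 := by
    nlinarith [mul_self_lt_mul_self hnn hkey]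
  have hB0 : 0 < (1 - α) ^ 2 - r ^ 2 := by nlinarith
  have hB1 : (1 - α / 2) ^ 2 ≤ (1 - abar * α) ^ 2 := by
    have h5 : abar * α ≤ α / 2 := by nlinarith
    have h6 : (0 : ℝ) ≤ 1 - α / 2 := by linarith
    exact pow_le_pow_left₀ h6 (by linarith) 2
  have hB2 : (1 - α) ^ 2 - r ^ 2 ≤ (1 - r ^ 2) * (1 - α / 2) ^ 2 := by
    have hid : (1 - α) ^ 2 - r ^ 2 - (1 - r ^ 2) * (1 - α / 2) ^ 2
        = -(α * (4 - 3 * α) / 4) - r ^ 2 * (α * (4 - α) / 4) := by ring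
    nlinarith [mul_pos h3 (show (0:ℝ) < 4 - 3 * α by linarith),
      mul_nonneg (sq_nonneg r) (mul_pos h3 (show (0:ℝ) < 4 - α by linarith)).le]
  have hB : (1 - α) ^ 2 - r ^ 2 ≤ (1 - r ^ 2) * (1 - abar * α) ^ 2 := by
    have h1r2 : (0 : ℝ) ≤ 1 - r ^ 2 := by nlinarith
    calc (1 - α) ^ 2 - r ^ 2 ≤ (1 - r ^ 2) * (1 - α / 2) ^ 2 := hB2
      _ ≤ (1 - r ^ 2) * (1 - abar * α) ^ 2 := mul_le_mul_of_nonneg_left hB1 h1r2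
  calc ((1 - abar) ^ 2 - (1 - r) ^ 2 * abar ^ 2) * ((1 - α) ^ 2 - r ^ 2)
      ≤ ((1 - abar) ^ 2 - (1 - r) ^ 2 * abar ^ 2) * ((1 - r ^ 2) * (1 - abar * α) ^ 2) :=
        mul_le_mul_of_nonneg_left hB hA0.le
    _ < (1 - r) ^ 2 * (1 - r ^ 2) * ((1 - r ^ 2) * (1 - abar * α) ^ 2) := by
        have h1r2 : 0 < 1 - r ^ 2 := by nlinarith
        exact mul_lt_mul_of_pos_right hA (by positivity)
    _ = (1 - r) ^ 2 * (1 - r ^ 2) ^ 2 * (1 - abar * α) ^ 2 := by ring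
end
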